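/- Let 1 ≤ p ≤ 2 and let (γ_k)_{k≥0} be a sequence of positive real numbers with γ_0 = 1. Suppose that for every analytic polynomial f(z) = ∑_{k=0}^K a_k z^k in one variable, ∑_{k=0}^K |a_k|² γ_k ≤ (∫_𝕋 |f(w)|^p dm(w))^{2/p}. Then for every d ≥ 1 and every analytic polynomial f(z₁,…,z_d) = ∑_{κ ∈ ℕ^d} a_κ z₁^{κ₁} ⋯ z_d^{κ_d} (with finitely many nonzero coefficients), one has ∑_{κ ∈ ℕ^d} |a_κ|² γ_{κ₁} ⋯ γ_{κ_d} ≤ (∫_{𝕋^d} |f(w)|^p dm_d(w))^{2/p}, where m_d is the normalized Haar measure on the d-torus 𝕋^d (the d-fold product of m). -/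

import Mathlib

/-!
Induction on `d`. Split off the first variable, `f(t, θ) = ∑ₖ fₖ(θ) e^{ikt}`. For fixed `θ`, the
one-variable hypothesis gives `(∑ₖ γₖ |fₖ(θ)|²)^{p/2} ≤ ∫ |f(t, θ)|^p dm(t)`; integrating in `θ`
bounds `‖(∑ₖ γₖ |fₖ|²)^{1/2}‖_p²` by `‖f‖_p²`. The induction hypothesis bounds the left-hand side
of the claim by `∑ₖ γₖ ‖fₖ‖_p²`, and since `p/2 ≤ 1` this is at most `‖(∑ₖ γₖ |fₖ|²)^{1/2}‖_p²`
by the reverse Minkowski inequality in `L^{p/2}`, i.e. the triangle inequality for the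
`ℓ^{2/p}`-valued integral of `(γₖ^{p/2} |fₖ|^p)ₖ`.

Nothing about the characters `t ↦ e^{ikt}` is used beyond boundedness and measurability: the
argument tensorizes any such system `φ k` on a finite measure space.
-/

open MeasureTheory Finset

theorem sum_integral_rpow_inv_rpow_le {ι Ω : Type*} [MeasurableSpace Ω] (μ : Measure Ω)
    {q : ℝ} (hq : 1 ≤ q) (s : Finset ι) (G : ι → Ω → ℝ) (hG : ∀ i ω, 0 ≤ G i ω)
    (hGi : ∀ i, Integrable (fun ω => G i ω ^ q⁻¹) μ) :
    ∑ i ∈ s, (∫ ω, G i ω ^ q⁻¹ ∂μ) ^ q ≤ (∫ ω, (∑ i ∈ s, G i ω) ^ q⁻¹ ∂μ) ^ q := by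
  have hq0 : 0 < q := by linarith
  have : Fact (1 ≤ ENNReal.ofReal q) := ⟨by simpa using ENNReal.ofReal_le_ofReal hq⟩
  have hqr : (ENNReal.ofReal q).toReal = q := ENNReal.toReal_ofReal hq0.le
  have hnorm (v : PiLp (ENNReal.ofReal q) fun _ : s => ℝ) : ‖v‖ = (∑ i, |v i| ^ q) ^ q⁻¹ := by
    simp [PiLp.norm_eq_sum (hqr ▸ hq0), hqr]
  let H : Ω → PiLp (ENNReal.ofReal q) fun _ : s => ℝ :=
    fun ω => WithLp.toLp _ fun i => G i ω ^ q⁻¹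
  have hH (ω : Ω) : ‖H ω‖ = (∑ i ∈ s, G i ω) ^ q⁻¹ := by
    rw [hnorm, ← sum_coe_sort s]
    congr 1
    refine sum_congr rfl fun i _ => ?_
    simp only [H]
    rw [abs_of_nonneg (Real.rpow_nonneg (hG i ω) _), ← Real.rpow_mul (hG i ω),
      inv_mul_cancel₀ hq0.ne', Real.rpow_one]
  have hint : ‖∫ ω, H ω ∂μ‖ = (∑ i ∈ s, (∫ ω, G i ω ^ q⁻¹ ∂μ) ^ q) ^ q⁻¹ := by
    rw [hnorm, ← sum_coe_sort s]
    congr 1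
    refine sum_congr rfl fun i _ => ?_
    rw [eval_integral_piLp fun i => hGi i.1,
      abs_of_nonneg (integral_nonneg fun ω => Real.rpow_nonneg (hG i ω) _)]
  have key := norm_integral_le_integral_norm (μ := μ) H
  rw [hint, funext hH] at key
  exact (Real.rpow_inv_le_iff_of_pos (sum_nonneg fun i _ => Real.rpow_nonneg
    (integral_nonneg fun ω => Real.rpow_nonneg (hG i ω) _) _)
    (integral_nonneg fun ω => Real.rpow_nonneg (sum_nonneg fun i _ => hG i ω) _) hq0).1 key

theorem mul_sq_rpow_two_div_inv {c x : ℝ} (hc : 0 ≤ c) (hx : 0 ≤ x) (p : ℝ) :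
    (c * x ^ 2) ^ (2 / p)⁻¹ = c ^ (2 / p)⁻¹ * x ^ p := by
  rw [Real.mul_rpow hc (by positivity), inv_div, ← Real.rpow_natCast, ← Real.rpow_mul hx]
  congr 2
  push_cast
  ring

theorem integral_mul_sq_rpow_two_div_inv_rpow {Ω : Type*} [MeasurableSpace Ω] (μ : Measure Ω)
    {c p : ℝ} (hc : 0 ≤ c) (hp : p ≠ 0) (f : Ω → ℂ) :
    (∫ ω, (c * ‖f ω‖ ^ 2) ^ (2 / p)⁻¹ ∂μ) ^ (2 / p) = c * (∫ ω, ‖f ω‖ ^ p ∂μ) ^ (2 / p) := by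
  rw [funext fun ω => mul_sq_rpow_two_div_inv hc (norm_nonneg (f ω)) p, integral_const_mul,
    Real.mul_rpow (Real.rpow_nonneg hc _) (integral_nonneg fun ω => by positivity),
    ← Real.rpow_mul hc, inv_mul_cancel₀ (div_ne_zero two_ne_zero hp), Real.rpow_one]

section Fubini

variable {α E : Type*} [MeasurableSpace α] [NormedAddCommGroup E] {μ : Measure α}
  [SigmaFinite μ] {n : ℕ} {g : (Fin (n + 1) → α) → E}

theorem MeasurableEquiv.piFinSuccAbove_zero_symm_apply (z : α × (Fin n → α)) :
    (MeasurableEquiv.piFinSuccAbove (fun _ => α) 0).symm z = Fin.cons z.1 z.2 := by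
  simp [MeasurableEquiv.piFinSuccAbove_symm_apply, Fin.insertNthEquiv]

theorem MeasureTheory.Integrable.comp_fin_cons (hg : Integrable g (Measure.pi fun _ => μ)) :
    Integrable (fun z : α × (Fin n → α) => g (Fin.cons z.1 z.2))
      (μ.prod (Measure.pi fun _ => μ)) := by
  have e := (measurePreserving_piFinSuccAbove (fun _ : Fin (n + 1) => μ) 0).symm
  rw [← e.integrable_comp_emb (MeasurableEquiv.measurableEmbedding _)] at hg
  simpa only [Function.comp_def, MeasurableEquiv.piFinSuccAbove_zero_symm_apply] using hg

theorem integral_pi_succ_eq_integral_integral_cons [NormedSpace ℝ E]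
    (hg : Integrable g (Measure.pi fun _ => μ)) :
    ∫ θ, g θ ∂(Measure.pi fun _ => μ) =
      ∫ θ, ∫ t, g (Fin.cons t θ) ∂μ ∂(Measure.pi fun _ => μ) := by
  have e := (measurePreserving_piFinSuccAbove (fun _ : Fin (n + 1) => μ) 0).symm
  rw [← e.integral_comp (MeasurableEquiv.measurableEmbedding _),
    ← integral_prod_symm _ hg.comp_fin_cons]
  simp only [MeasurableEquiv.piFinSuccAbove_zero_symm_apply]

end Fubini

section Tensorization

variable {α : Type*}

/-- The paper's `∑_κ a_κ z^κ`, with `z_j ^ k` replaced by `φ k (θ j)`. -/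
noncomputable def tensorSum (φ : ℕ → α → ℂ) {d : ℕ} (S : Finset (Fin d → ℕ))
    (a : (Fin d → ℕ) → ℂ) (θ : Fin d → α) : ℂ :=
  ∑ κ ∈ S, a κ * ∏ j, φ (κ j) (θ j)

def indexCube (d K : ℕ) : Finset (Fin d → ℕ) :=
  Fintype.piFinset fun _ => range (K + 1)

theorem exists_subset_indexCube {d : ℕ} (S : Finset (Fin d → ℕ)) : ∃ K, S ⊆ indexCube d K :=
  ⟨S.sup fun κ => univ.sup κ, fun κ hκ => Fintype.mem_piFinset.2 fun j => mem_range_succ_iff.2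
    ((le_sup (f := κ) (mem_univ j)).trans (le_sup (f := fun κ => univ.sup κ) hκ))⟩

theorem sum_indexCube_succ {M : Type*} [AddCommMonoid M] (d K : ℕ)
    (g : (Fin (d + 1) → ℕ) → M) :
    ∑ κ ∈ indexCube (d + 1) K, g κ =
      ∑ k ∈ range (K + 1), ∑ κ ∈ indexCube d K, g (Fin.cons k κ) := by
  have h := filter_piFinset_eq_map_consEquiv (fun _ : Fin (d + 1) => range (K + 1)) fun _ => True
  simp only [filter_true] at h
  rw [indexCube, h, sum_map, sum_product]
  rfl

theorem tensorSum_cons (φ : ℕ → α → ℂ) (d K : ℕ) (a : (Fin (d + 1) → ℕ) → ℂ) (t : α)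
    (θ : Fin d → α) :
    tensorSum φ (indexCube (d + 1) K) a (Fin.cons t θ) =
      ∑ k ∈ range (K + 1),
        tensorSum φ (indexCube d K) (fun κ => a (Fin.cons k κ)) θ * φ k t := by
  simp only [tensorSum, sum_indexCube_succ, sum_mul, Fin.prod_univ_succ, Fin.cons_zero,
    Fin.cons_succ]
  exact sum_congr rfl fun k _ => sum_congr rfl fun κ _ => by ring

theorem sum_indexCube_succ_norm_sq_mul_prod (γ : ℕ → ℝ) (d K : ℕ)
    (a : (Fin (d + 1) → ℕ) → ℂ) :
    ∑ κ ∈ indexCube (d + 1) K, ‖a κ‖ ^ 2 * ∏ j, γ (κ j) =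
      ∑ k ∈ range (K + 1),
        γ k * ∑ κ ∈ indexCube d K, ‖a (Fin.cons k κ)‖ ^ 2 * ∏ j, γ (κ j) := by
  simp only [sum_indexCube_succ, mul_sum, Fin.prod_univ_succ, Fin.cons_zero, Fin.cons_succ]
  exact sum_congr rfl fun k _ => sum_congr rfl fun κ _ => by ring

theorem measurable_tensorSum [MeasurableSpace α] {φ : ℕ → α → ℂ}
    (hφ : ∀ k, Measurable (φ k)) {d : ℕ} (S : Finset (Fin d → ℕ)) (a : (Fin d → ℕ) → ℂ) :
    Measurable (tensorSum φ S a) := by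
  unfold tensorSum
  fun_prop

theorem exists_norm_tensorSum_le {φ : ℕ → α → ℂ} (hφ : ∀ k, ∃ C, ∀ t, ‖φ k t‖ ≤ C) {d : ℕ}
    (S : Finset (Fin d → ℕ)) (a : (Fin d → ℕ) → ℂ) : ∃ C, ∀ θ, ‖tensorSum φ S a θ‖ ≤ C := by
  choose C hC using hφ
  refine ⟨∑ κ ∈ S, ‖a κ‖ * ∏ j, C (κ j), fun θ => (norm_sum_le _ _).trans ?_⟩
  refine sum_le_sum fun κ _ => ?_
  rw [norm_mul, norm_prod]
  gcongr with j
  exact hC _ _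

variable [MeasurableSpace α] {μ : Measure α} [IsFiniteMeasure μ] {φ : ℕ → α → ℂ}
  {p : ℝ} {γ : ℕ → ℝ}

theorem integrable_norm_tensorSum_rpow (hφm : ∀ k, Measurable (φ k))
    (hφb : ∀ k, ∃ C, ∀ t, ‖φ k t‖ ≤ C) (hp : 0 ≤ p) {d : ℕ} (S : Finset (Fin d → ℕ))
    (a : (Fin d → ℕ) → ℂ) :
    Integrable (fun θ => ‖tensorSum φ S a θ‖ ^ p) (Measure.pi fun _ => μ) := by
  obtain ⟨C, hC⟩ := exists_norm_tensorSum_le hφb S a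
  refine Integrable.of_bound
    ((measurable_tensorSum hφm S a).norm.pow_const p).aestronglyMeasurable (C ^ p)
    (ae_of_all _ fun θ => ?_)
  rw [Real.norm_of_nonneg (by positivity)]
  exact Real.rpow_le_rpow (norm_nonneg _) (hC θ) hp

theorem sum_indexCube_norm_sq_mul_prod_le (hp0 : 0 < p) (hp2 : p ≤ 2) (hγ : ∀ k, 0 ≤ γ k)
    (hφm : ∀ k, Measurable (φ k)) (hφb : ∀ k, ∃ C, ∀ t, ‖φ k t‖ ≤ C)
    (h1 : ∀ (K : ℕ) (c : ℕ → ℂ), ∑ k ∈ range (K + 1), ‖c k‖ ^ 2 * γ k ≤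
      (∫ t, ‖∑ k ∈ range (K + 1), c k * φ k t‖ ^ p ∂μ) ^ (2 / p))
    (d K : ℕ) (a : (Fin d → ℕ) → ℂ) :
    ∑ κ ∈ indexCube d K, ‖a κ‖ ^ 2 * ∏ j, γ (κ j) ≤
      (∫ θ, ‖tensorSum φ (indexCube d K) a θ‖ ^ p ∂(Measure.pi fun _ => μ)) ^ (2 / p) := by
  induction d with
  | zero =>
    have hcube : indexCube 0 K = univ :=
      eq_univ_of_forall fun κ => Fintype.mem_piFinset.2 fun j => j.elim0
    rw [Measure.pi_of_empty _ default, integral_dirac, hcube]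
    simp [tensorSum, ← Real.rpow_mul (norm_nonneg _), mul_div_cancel₀ _ hp0.ne']
  | succ d ih =>
    set q := 2 / p
    have hq : 1 ≤ q := by rw [le_div_iff₀ hp0]; linarith
    set f : ℕ → (Fin d → α) → ℂ :=
      fun k => tensorSum φ (indexCube d K) fun κ => a (Fin.cons k κ)
    set G : ℕ → (Fin d → α) → ℝ := fun k θ => γ k * ‖f k θ‖ ^ 2
    have hG (k : ℕ) (θ : Fin d → α) : 0 ≤ G k θ := mul_nonneg (hγ k) (sq_nonneg _)
    have hGi (k : ℕ) : Integrable (fun θ => G k θ ^ q⁻¹) (Measure.pi fun _ => μ) := by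
      refine ((integrable_norm_tensorSum_rpow (μ := μ) hφm hφb hp0.le (indexCube d K)
        fun κ => a (Fin.cons k κ)).const_mul (γ k ^ q⁻¹)).congr
        (ae_of_all _ fun θ => ?_)
      exact (mul_sq_rpow_two_div_inv (hγ k) (norm_nonneg (f k θ)) p).symm
    have hslice (θ : Fin d → α) : (∑ k ∈ range (K + 1), G k θ) ^ q⁻¹ ≤
        ∫ t, ‖tensorSum φ (indexCube (d + 1) K) a (Fin.cons t θ)‖ ^ p ∂μ := by
      rw [Real.rpow_inv_le_iff_of_pos (sum_nonneg fun k _ => hG k θ)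
        (integral_nonneg fun t => by positivity) (by positivity)]
      simpa only [tensorSum_cons, G, mul_comm (γ _)] using h1 K fun k => f k θ
    have hP := integrable_norm_tensorSum_rpow (μ := μ) hφm hφb hp0.le (indexCube (d + 1) K) a
    calc ∑ κ ∈ indexCube (d + 1) K, ‖a κ‖ ^ 2 * ∏ j, γ (κ j)
        = ∑ k ∈ range (K + 1), γ k *
            ∑ κ ∈ indexCube d K, ‖a (Fin.cons k κ)‖ ^ 2 * ∏ j, γ (κ j) :=
          sum_indexCube_succ_norm_sq_mul_prod γ d K a
      _ ≤ ∑ k ∈ range (K + 1), γ k * (∫ θ, ‖f k θ‖ ^ p ∂(Measure.pi fun _ => μ)) ^ q :=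
          sum_le_sum fun k _ => mul_le_mul_of_nonneg_left (ih _) (hγ k)
      _ = ∑ k ∈ range (K + 1), (∫ θ, G k θ ^ q⁻¹ ∂(Measure.pi fun _ => μ)) ^ q :=
          sum_congr rfl fun k _ =>
            (integral_mul_sq_rpow_two_div_inv_rpow _ (hγ k) hp0.ne' (f k)).symm
      _ ≤ (∫ θ, (∑ k ∈ range (K + 1), G k θ) ^ q⁻¹ ∂(Measure.pi fun _ => μ)) ^ q :=
          sum_integral_rpow_inv_rpow_le _ hq _ G hG hGi
      _ ≤ (∫ θ, ∫ t, ‖tensorSum φ (indexCube (d + 1) K) a (Fin.cons t θ)‖ ^ p ∂μ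
            ∂(Measure.pi fun _ => μ)) ^ q := by
          have hG' (θ : Fin d → α) : 0 ≤ (∑ k ∈ range (K + 1), G k θ) ^ q⁻¹ :=
            Real.rpow_nonneg (sum_nonneg fun k _ => hG k θ) _
          gcongr ?_ ^ q
          · exact integral_nonneg hG'
          · exact integral_mono_of_nonneg (ae_of_all _ hG')
              hP.comp_fin_cons.integral_prod_right (ae_of_all _ hslice)
      _ = _ := by rw [integral_pi_succ_eq_integral_integral_cons hP]

theorem sum_norm_sq_mul_prod_le (hp0 : 0 < p) (hp2 : p ≤ 2) (hγ : ∀ k, 0 ≤ γ k)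
    (hφm : ∀ k, Measurable (φ k)) (hφb : ∀ k, ∃ C, ∀ t, ‖φ k t‖ ≤ C)
    (h1 : ∀ (K : ℕ) (c : ℕ → ℂ), ∑ k ∈ range (K + 1), ‖c k‖ ^ 2 * γ k ≤
      (∫ t, ‖∑ k ∈ range (K + 1), c k * φ k t‖ ^ p ∂μ) ^ (2 / p))
    (d : ℕ) (S : Finset (Fin d → ℕ)) (a : (Fin d → ℕ) → ℂ) :
    ∑ κ ∈ S, ‖a κ‖ ^ 2 * ∏ j, γ (κ j) ≤
      (∫ θ, ‖tensorSum φ S a θ‖ ^ p ∂(Measure.pi fun _ => μ)) ^ (2 / p) := by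
  obtain ⟨K, hK⟩ := exists_subset_indexCube S
  set b : (Fin d → ℕ) → ℂ := fun κ => if κ ∈ S then a κ else 0
  have hsum {M : Type} [AddCommMonoid M] (g : (Fin d → ℕ) → ℂ → M) (hg : ∀ κ, g κ 0 = 0) :
      ∑ κ ∈ indexCube d K, g κ (b κ) = ∑ κ ∈ S, g κ (a κ) := by
    rw [← sum_subset hK fun κ _ hκ => by simp [b, hκ, hg]]
    exact sum_congr rfl fun κ hκ => by simp [b, hκ]
  have htensor (θ : Fin d → α) : tensorSum φ (indexCube d K) b θ = tensorSum φ S a θ :=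
    hsum (fun κ z => z * ∏ j, φ (κ j) (θ j)) fun κ => zero_mul _
  simpa only [hsum (fun κ z => ‖z‖ ^ 2 * ∏ j, γ (κ j)) fun κ => by simp, htensor] using
    sum_indexCube_norm_sq_mul_prod_le hp0 hp2 hγ hφm hφb h1 d K b

end Tensorization

theorem MeasureTheory.Measure.pi_nnreal_smul {ι β : Type*} [Fintype ι] [MeasurableSpace β]
    (c : NNReal) (ν : Measure β) [SigmaFinite ν] :
    Measure.pi (fun _ : ι => c • ν) = c ^ Fintype.card ι • Measure.pi fun _ => ν := by
  refine Measure.pi_eq fun s hs => ?_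
  rw [Measure.smul_apply, Measure.pi_pi]
  simp only [Measure.smul_apply, ENNReal.smul_def, smul_eq_mul, prod_mul_distrib, prod_const,
    card_univ, ENNReal.coe_pow]

/-- Under `t ↦ exp (i t)` this pushes forward to the Haar measure `m` of `𝕋`. -/
noncomputable def normalizedAngleMeasure : Measure ℝ :=
  (2 * NNReal.pi)⁻¹ • volume.restrict (Set.Ioc 0 (2 * Real.pi))

instance : IsFiniteMeasure normalizedAngleMeasure := by
  unfold normalizedAngleMeasure
  infer_instance

theorem integral_normalizedAngleMeasure (f : ℝ → ℝ) :
    ∫ t, f t ∂normalizedAngleMeasure =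
      1 / (2 * Real.pi) * ∫ t in (0 : ℝ)..2 * Real.pi, f t := by
  rw [normalizedAngleMeasure, integral_smul_nnreal_measure,
    intervalIntegral.integral_of_le (by positivity)]
  simp [NNReal.smul_def, NNReal.coe_real_pi]

theorem integral_pi_normalizedAngleMeasure {d : ℕ} (f : (Fin d → ℝ) → ℝ) :
    ∫ θ, f θ ∂(Measure.pi fun _ => normalizedAngleMeasure) =
      (1 / (2 * Real.pi)) ^ d * ∫ θ in Set.univ.pi fun _ => Set.Ioc 0 (2 * Real.pi), f θ := by
  rw [normalizedAngleMeasure, Measure.pi_nnreal_smul, integral_smul_nnreal_measure,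
    ← Measure.restrict_pi_pi, ← volume_pi]
  simp [NNReal.smul_def, NNReal.coe_real_pi]

theorem stmt4 (p : ℝ) (hp1 : 1 ≤ p) (hp2 : p ≤ 2) (γ : ℕ → ℝ)
    (hγpos : ∀ k, 0 < γ k)
    (h1 : ∀ (K : ℕ) (a : ℕ → ℂ),
      ∑ k ∈ Finset.range (K + 1), ‖a k‖ ^ 2 * γ k ≤
        ((1 / (2 * Real.pi)) * ∫ θ in (0 : ℝ)..(2 * Real.pi),
          ‖∑ k ∈ Finset.range (K + 1), a k * Complex.exp (Complex.I * (θ : ℂ)) ^ k‖ ^ p)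
          ^ (2 / p))
    (d : ℕ) (S : Finset (Fin d → ℕ)) (a : (Fin d → ℕ) → ℂ) :
    ∑ κ ∈ S, ‖a κ‖ ^ 2 * ∏ j, γ (κ j) ≤
      ((1 / (2 * Real.pi)) ^ d *
        ∫ θ in Set.univ.pi (fun _ : Fin d => Set.Ioc (0 : ℝ) (2 * Real.pi)),
          ‖∑ κ ∈ S, a κ * ∏ j, Complex.exp (Complex.I * (θ j : ℂ)) ^ κ j‖ ^ p)
        ^ (2 / p) := by
  have h := sum_norm_sq_mul_prod_le (μ := normalizedAngleMeasure)
    (φ := fun k t => Complex.exp (Complex.I * t) ^ k) (by linarith) hp2 (fun k => (hγpos k).le)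
    (fun k => by fun_prop) (fun k => ⟨1, fun t => by simp [Complex.norm_exp]⟩)
    (fun K c => by simpa only [integral_normalizedAngleMeasure] using h1 K c) d S a
  rwa [integral_pi_normalizedAngleMeasure] at h
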